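/- Let n ≥ 1 and for m ≥ 1 let s_m(ℤ^n) denote the number of subgroups of ℤ^n of index at most m. Then s_m(ℤ^n)/m^n converges, as m → ∞, to (1/n) · ζ(n)·ζ(n−1)⋯ζ(2), where ζ denotes the Riemann zeta function and the product is empty (equal to 1) when n = 1. In particular, for n = 2, s_m(ℤ^2)/m^2 → π²/12. -/

import Mathlib

/-!
A subgroup `H` of finite index in `ℤ × A` is determined by `K = H ∩ A`, the generator `d` of its
projection to `ℤ`, and the class modulo `K` of any `v` with `(d, v) ∈ H`. Hence the number
`a_{n+1}(j)` of subgroups of index `j` of `ℤ^{n+1}` is `∑_{e ∣ j} e · a_n(e)`, and summing over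
`j ≤ m` gives `s_{n+1}(m) = ∑_{d ≤ m} T(⌊m/d⌋)` with `T(k) = ∑_{e ≤ k} e · a_n(e)`.
If `s_n(m) ~ c m^n`, partial summation gives `T(k) ~ c n/(n+1) · k^{n+1}`, and dominated
convergence in `d` gives `s_{n+1}(m) ~ c n/(n+1) · ζ(n+1) · m^{n+1}`.
Starting from `s_1(m) = m`, induction yields the constant `(1/n) ζ(2) ⋯ ζ(n)`.
-/

open Finset Filter

/-- `s_m(ℤ^n)`, the number of subgroups of `ℤ^n` of finite index at most `m`. -/
noncomputable def subgroupCountUpTo (n m : ℕ) : ℕ :=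
  Nat.card {H : AddSubgroup (Fin n → ℤ) // 1 ≤ H.index ∧ H.index ≤ m}

open Topology
open scoped ArithmeticFunction.zeta
open AddSubgroup (zmultiples)

theorem AddSubgroup.index_eq_index_map_fst_mul_index_comap_inr {G G' : Type*} [AddCommGroup G]
    [AddCommGroup G'] (H : AddSubgroup (G × G')) :
    H.index = (H.map (AddMonoidHom.fst G G')).index * (H.comap (AddMonoidHom.inr G G')).index := by
  have hker : (AddMonoidHom.fst G G').ker = (AddMonoidHom.inr G G').range := by
    ext x
    simp [mem_prod, Prod.ext_iff, eq_comm]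
  rw [index_map, (AddMonoidHom.fst G G').range_eq_top_of_surjective Prod.fst_surjective,
    index_top, mul_one, index_comap, ← hker, ← relIndex_sup_left, mul_comm,
    relIndex_mul_index le_sup_left]

theorem Nat.div_ne_zero_of_mem_divisors {j e : ℕ} (h : e ∈ j.divisors) : j / e ≠ 0 :=
  (Nat.div_pos (Nat.divisor_le h) (Nat.pos_of_mem_divisors h)).ne'

section Triangular

variable {A : Type*} [AddCommGroup A]

def triangular (d : ℕ) (v : A) (K : AddSubgroup A) : AddSubgroup (ℤ × A) :=
  zmultiples ((d : ℤ), v) ⊔ (⊥ : AddSubgroup ℤ).prod K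

theorem mem_triangular {d : ℕ} {v : A} {K : AddSubgroup A} {x : ℤ × A} :
    x ∈ triangular d v K ↔ ∃ k : ℤ, x.1 = k * d ∧ x.2 - k • v ∈ K := by
  simp only [triangular, AddSubgroup.mem_sup, AddSubgroup.mem_zmultiples_iff,
    AddSubgroup.mem_prod, AddSubgroup.mem_bot]
  constructor
  · rintro ⟨_, ⟨k, rfl⟩, z, ⟨hz1, hz2⟩, rfl⟩
    exact ⟨k, by simp [hz1], by simpa using hz2⟩
  · rintro ⟨k, h1, h2⟩
    exact ⟨_, ⟨k, rfl⟩, (0, x.2 - k • v), ⟨rfl, h2⟩, Prod.ext (by simp [h1]) (by simp)⟩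

theorem comap_inr_triangular {d : ℕ} (hd : d ≠ 0) (v : A) (K : AddSubgroup A) :
    (triangular d v K).comap (AddMonoidHom.inr ℤ A) = K := by
  ext y
  simp only [AddSubgroup.mem_comap, AddMonoidHom.inr_apply, mem_triangular, zero_eq_mul,
    Nat.cast_eq_zero, hd, or_false]
  constructor
  · rintro ⟨k, rfl, hk⟩
    simpa using hk
  · exact fun hy => ⟨0, rfl, by simpa using hy⟩

theorem map_fst_triangular (d : ℕ) (v : A) (K : AddSubgroup A) :
    (triangular d v K).map (AddMonoidHom.fst ℤ A) = zmultiples (d : ℤ) := by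
  ext x
  simp only [AddSubgroup.mem_map, AddMonoidHom.coe_fst, Int.mem_zmultiples_iff, mem_triangular]
  constructor
  · rintro ⟨y, ⟨k, hk, -⟩, rfl⟩
    exact ⟨k, by rw [hk, mul_comm]⟩
  · rintro ⟨k, rfl⟩
    exact ⟨(d * k, k • v), ⟨k, mul_comm _ _, by simp⟩, rfl⟩

theorem index_triangular {d : ℕ} (hd : d ≠ 0) (v : A) (K : AddSubgroup A) :
    (triangular d v K).index = d * K.index := by
  rw [AddSubgroup.index_eq_index_map_fst_mul_index_comap_inr, map_fst_triangular,
    comap_inr_triangular hd, Int.index_zmultiples, Int.natAbs_natCast]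

theorem triangular_eq_triangular_iff {d : ℕ} (hd : d ≠ 0) {v w : A} {K : AddSubgroup A} :
    triangular d v K = triangular d w K ↔ w - v ∈ K := by
  constructor
  · intro h
    have hw : ((d : ℤ), w) ∈ triangular d v K := h ▸ mem_triangular.2 ⟨1, by simp, by simp⟩
    obtain ⟨k, hk, hwk⟩ := mem_triangular.1 hw
    obtain rfl : k = 1 :=
      (mul_left_inj' (Int.natCast_ne_zero.2 hd)).1 (by simpa using hk.symm)
    simpa using hwk
  · intro h
    ext x
    simp only [mem_triangular]
    refine exists_congr fun k => and_congr_right fun _ => ?_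
    rw [show x.2 - k • v = x.2 - k • w + k • (w - v) by rw [smul_sub]; abel,
      add_mem_cancel_right (zsmul_mem h k)]

theorem exists_eq_triangular {H : AddSubgroup (ℤ × A)} (hH : H.index ≠ 0) :
    ∃ d ≠ 0, ∃ v : A, H = triangular d v (H.comap (AddMonoidHom.inr ℤ A)) := by
  obtain ⟨a, ha⟩ := Int.subgroup_cyclic (H.map (AddMonoidHom.fst ℤ A))
  have hmap : H.map (AddMonoidHom.fst ℤ A) = zmultiples (a.natAbs : ℤ) := by
    rw [ha, Int.zmultiples_natAbs, AddSubgroup.zmultiples_eq_closure]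
  have hd : a.natAbs ≠ 0 := by
    rw [AddSubgroup.index_eq_index_map_fst_mul_index_comap_inr, hmap, Int.index_zmultiples] at hH
    exact left_ne_zero_of_mul hH
  obtain ⟨⟨_, v⟩, hv, rfl⟩ : (a.natAbs : ℤ) ∈ H.map (AddMonoidHom.fst ℤ A) :=
    hmap ▸ AddSubgroup.mem_zmultiples _
  refine ⟨_, hd, v, le_antisymm (fun x hx => ?_) ?_⟩
  · obtain ⟨k, hk⟩ : x.1 ∈ zmultiples (a.natAbs : ℤ) := hmap ▸ AddSubgroup.mem_map_of_mem _ hx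
    refine mem_triangular.2 ⟨k, by simpa [eq_comm] using hk, ?_⟩
    have hsub : x - k • ((a.natAbs : ℤ), v) = (0, x.2 - k • v) := by ext <;> simp [← hk]
    simpa only [AddSubgroup.mem_comap, AddMonoidHom.inr_apply, ← hsub] using
      H.sub_mem hx (H.zsmul_mem hv k)
  · refine sup_le (AddSubgroup.zmultiples_le_of_mem hv) fun x hx => ?_
    obtain ⟨hx1, hx2⟩ := AddSubgroup.mem_prod.1 hx
    rw [show x = (0, x.2) from Prod.ext (AddSubgroup.mem_bot.1 hx1) rfl]
    exact hx2

-- `e` is the index of `H ∩ A` and `j / e` the index of the projection of `H` to `ℤ`.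
variable (A) in
noncomputable def triangularOfIndex (j : ℕ) :
    (Σ e : j.divisors, Σ K : {K : AddSubgroup A // K.index = e}, A ⧸ K.1) →
      {H : AddSubgroup (ℤ × A) // H.index = j}
  | ⟨e, K, q⟩ =>
    have he : e.1 ∣ j := Nat.dvd_of_mem_divisors e.2
    have hd : j / e ≠ 0 := Nat.div_ne_zero_of_mem_divisors e.2
    Quotient.liftOn' q (fun v => ⟨triangular (j / e) v K, by
      rw [index_triangular hd, K.2, Nat.div_mul_cancel he]⟩) fun v w h =>
      Subtype.ext ((triangular_eq_triangular_iff hd).2 (by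
        simpa [neg_add_eq_sub] using QuotientAddGroup.leftRel_apply.1 h))

theorem coe_triangularOfIndex_mk {j : ℕ} (e : j.divisors) (K : {K : AddSubgroup A // K.index = e})
    (v : A) : (triangularOfIndex A j ⟨e, K, v⟩ : AddSubgroup (ℤ × A)) = triangular (j / e) v K :=
  rfl

theorem triangularOfIndex_bijective {j : ℕ} (hj : j ≠ 0) :
    Function.Bijective (triangularOfIndex A j) := by
  constructor
  · rintro ⟨e, ⟨K, hK⟩, q⟩ ⟨e', ⟨K', hK'⟩, q'⟩ h
    induction q using QuotientAddGroup.induction_on with | H v => ?_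
    induction q' using QuotientAddGroup.induction_on with | H v' => ?_
    have hd (e : j.divisors) : j / e ≠ 0 := Nat.div_ne_zero_of_mem_divisors e.2
    have h' : triangular (j / e) v K = triangular (j / e') v' K' := congrArg Subtype.val h
    obtain rfl : K = K' := by
      rw [← comap_inr_triangular (hd e) v K, h', comap_inr_triangular (hd e') v' K']
    obtain rfl : e = e' := Subtype.ext (hK.symm.trans hK')
    have hv : v' - v ∈ K := (triangular_eq_triangular_iff (hd e)).1 h'
    simpa [QuotientAddGroup.eq, neg_add_eq_sub] using hv
  · rintro ⟨H, hHj⟩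
    obtain ⟨d, hd, v, hH⟩ := exists_eq_triangular (hHj ▸ hj)
    set K := H.comap (AddMonoidHom.inr ℤ A)
    have hindex : j = d * K.index := by rw [← hHj, hH, index_triangular hd]
    have he : K.index ∈ j.divisors := Nat.mem_divisors.2 ⟨hindex ▸ dvd_mul_left _ _, hj⟩
    refine ⟨⟨⟨_, he⟩, ⟨K, rfl⟩, v⟩, Subtype.ext ?_⟩
    rw [coe_triangularOfIndex_mk]
    dsimp only
    rw [hindex, Nat.mul_div_cancel _ (Nat.pos_of_mem_divisors he), ← hH]

theorem finite_subgroups_index_int_prod (hA : ∀ e ≠ 0, Finite {K : AddSubgroup A // K.index = e})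
    {j : ℕ} (hj : j ≠ 0) : Finite {H : AddSubgroup (ℤ × A) // H.index = j} := by
  have (e : j.divisors) : Finite {K : AddSubgroup A // K.index = e} :=
    hA e (Nat.pos_of_mem_divisors e.2).ne'
  have (e : j.divisors) (K : {K : AddSubgroup A // K.index = e}) : Finite (A ⧸ K.1) :=
    Nat.finite_of_card_ne_zero (K.2.trans_ne (Nat.pos_of_mem_divisors e.2).ne')
  exact Finite.of_surjective _ (triangularOfIndex_bijective hj).2

theorem card_subgroups_index_int_prod
    (hA : ∀ e ≠ 0, Finite {K : AddSubgroup A // K.index = e}) {j : ℕ} (hj : j ≠ 0) :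
    Nat.card {H : AddSubgroup (ℤ × A) // H.index = j} =
      ∑ e ∈ j.divisors, e * Nat.card {K : AddSubgroup A // K.index = e} := by
  have (e : j.divisors) : Finite {K : AddSubgroup A // K.index = e} :=
    hA e (Nat.pos_of_mem_divisors e.2).ne'
  have (e : j.divisors) (K : {K : AddSubgroup A // K.index = e}) : Finite (A ⧸ K.1) :=
    Nat.finite_of_card_ne_zero (K.2.trans_ne (Nat.pos_of_mem_divisors e.2).ne')
  rw [← Nat.card_congr (Equiv.ofBijective _ (triangularOfIndex_bijective hj)), Nat.card_sigma,
    ← sum_coe_sort j.divisors]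
  refine sum_congr rfl fun e _ => ?_
  have := Fintype.ofFinite {K : AddSubgroup A // K.index = e}
  rw [Nat.card_sigma, Nat.card_eq_fintype_card, mul_comm]
  exact (sum_congr rfl fun K _ => K.2).trans (by simp)

end Triangular

def AddEquiv.subgroupsOfIndexCongr {G G' : Type*} [AddGroup G] [AddGroup G'] (φ : G ≃+ G')
    (j : ℕ) : {H : AddSubgroup G // H.index = j} ≃ {H : AddSubgroup G' // H.index = j} :=
  φ.mapAddSubgroup.toEquiv.subtypeEquiv fun H => by
    simp [AddEquiv.mapAddSubgroup, AddSubgroup.index_map_equiv]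

theorem finite_subgroups_index_pi (n : ℕ) {j : ℕ} (hj : j ≠ 0) :
    Finite {H : AddSubgroup (Fin n → ℤ) // H.index = j} := by
  induction n generalizing j with
  | zero => infer_instance
  | succ n ih =>
    have := finite_subgroups_index_int_prod (fun e he => ih he) hj
    exact .of_equiv _ (AddEquiv.subgroupsOfIndexCongr
      (Fin.consLinearEquiv ℤ fun _ : Fin (n + 1) => ℤ).toAddEquiv j)

theorem card_subgroups_index_pi_succ (n : ℕ) {j : ℕ} (hj : j ≠ 0) :
    Nat.card {H : AddSubgroup (Fin (n + 1) → ℤ) // H.index = j} =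
      ∑ e ∈ j.divisors, e * Nat.card {K : AddSubgroup (Fin n → ℤ) // K.index = e} := by
  rw [← card_subgroups_index_int_prod (fun e he => finite_subgroups_index_pi n he) hj]
  exact (Nat.card_congr (AddEquiv.subgroupsOfIndexCongr
    (Fin.consLinearEquiv ℤ fun _ : Fin (n + 1) => ℤ).toAddEquiv j)).symm

theorem card_subgroups_index_pi_one {j : ℕ} (hj : j ≠ 0) :
    Nat.card {H : AddSubgroup (Fin 1 → ℤ) // H.index = j} = 1 := by
  have hK (K : AddSubgroup (Fin 0 → ℤ)) : K.index = 1 := by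
    rw [Subsingleton.elim K ⊤, AddSubgroup.index_top]
  have hcard (e : ℕ) :
      Nat.card {K : AddSubgroup (Fin 0 → ℤ) // K.index = e} = if e = 1 then 1 else 0 := by
    split_ifs with he <;> simp [hK, he, eq_comm]
  rw [card_subgroups_index_pi_succ 0 hj]
  simp only [hcard, mul_ite, mul_one, mul_zero, sum_ite_eq', Nat.one_mem_divisors.2 hj, if_true]

theorem subgroupCountUpTo_eq_sum (n m : ℕ) :
    subgroupCountUpTo n m =
      ∑ j ∈ Ioc 0 m, Nat.card {H : AddSubgroup (Fin n → ℤ) // H.index = j} := by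
  have (j : Ioc 0 m) : Finite {H : AddSubgroup (Fin n → ℤ) // H.index = j} :=
    finite_subgroups_index_pi n (mem_Ioc.1 j.2).1.ne'
  rw [subgroupCountUpTo, ← Nat.card_congr (Equiv.sigmaSubtypeFiberEquivSubtype AddSubgroup.index
    (q := (· ∈ Ioc 0 m)) fun H => by simp [Nat.one_le_iff_ne_zero, Nat.pos_iff_ne_zero]),
    Nat.card_sigma]
  exact sum_coe_sort (Ioc 0 m) fun j => Nat.card {H : AddSubgroup (Fin n → ℤ) // H.index = j}

theorem sum_range_pow_le_div (p m : ℕ) :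
    ∑ x ∈ range m, (x : ℝ) ^ p ≤ (m : ℝ) ^ (p + 1) / (p + 1) := by
  have hmono : MonotoneOn (fun x : ℝ => x ^ p) (Set.Icc 0 (0 + m)) :=
    pow_left_monotoneOn.mono fun x hx => hx.1
  simpa [integral_pow] using hmono.sum_le_integral

theorem div_le_sum_range_pow_add (p m : ℕ) :
    (m : ℝ) ^ (p + 1) / (p + 1) ≤ ∑ x ∈ range m, (x : ℝ) ^ p + (m : ℝ) ^ p := by
  have hmono : MonotoneOn (fun x : ℝ => x ^ p) (Set.Icc 0 (0 + m)) :=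
    pow_left_monotoneOn.mono fun x hx => hx.1
  have hint : (m : ℝ) ^ (p + 1) / (p + 1) ≤ ∑ i ∈ range m, ((i + 1 : ℕ) : ℝ) ^ p := by
    simpa [integral_pow] using hmono.integral_le_sum
  have hshift : ∑ i ∈ range m, ((i + 1 : ℕ) : ℝ) ^ p + ((0 : ℕ) : ℝ) ^ p =
      ∑ x ∈ range m, (x : ℝ) ^ p + (m : ℝ) ^ p := by
    rw [← sum_range_succ' (fun x : ℕ => (x : ℝ) ^ p), sum_range_succ]
  have h0 : (0 : ℝ) ≤ ((0 : ℕ) : ℝ) ^ p := by positivity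
  linarith

theorem tendsto_sum_range_pow_div_pow (p : ℕ) :
    Tendsto (fun m : ℕ => (∑ x ∈ range m, (x : ℝ) ^ p) / (m : ℝ) ^ (p + 1)) atTop
      (𝓝 (1 / (p + 1))) := by
  have hlow : Tendsto (fun m : ℕ => 1 / (p + 1 : ℝ) - 1 / m) atTop (𝓝 (1 / (p + 1))) := by
    simpa using tendsto_const_nhds.sub (tendsto_one_div_atTop_nhds_zero_nat (𝕜 := ℝ))
  refine tendsto_of_tendsto_of_tendsto_of_le_of_le' hlow tendsto_const_nhds ?_ ?_
  all_goals filter_upwards [eventually_gt_atTop 0] with m hm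
  · have hm' : (0 : ℝ) < m := Nat.cast_pos.2 hm
    have hsub : (1 / (p + 1 : ℝ) - 1 / m) * m ^ (p + 1) = m ^ (p + 1) / (p + 1) - m ^ p := by
      field_simp
      ring
    rw [le_div_iff₀ (by positivity), hsub]
    linarith [div_le_sum_range_pow_add p m]
  · rw [div_le_iff₀ (by positivity), one_div_mul_eq_div]
    exact sum_range_pow_le_div p m

theorem Filter.Tendsto.sum_range_div_pow {f : ℕ → ℝ} {p : ℕ} {c : ℝ}
    (hf : Tendsto (fun m : ℕ => f m / (m : ℝ) ^ p) atTop (𝓝 c)) :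
    Tendsto (fun m : ℕ => (∑ x ∈ range m, f x) / (m : ℝ) ^ (p + 1)) atTop (𝓝 (c / (p + 1))) := by
  have hpos : ∀ᶠ m : ℕ in atTop, (m : ℝ) ^ p ≠ 0 := by
    filter_upwards [eventually_gt_atTop 0] with m hm using by positivity
  have herr : (fun x : ℕ => f x - c * (x : ℝ) ^ p) =o[atTop] (fun x : ℕ => (x : ℝ) ^ p) := by
    refine (Asymptotics.isLittleO_iff_tendsto' (hpos.mono fun m hm h => absurd h hm)).2 ?_
    refine (sub_self c ▸ hf.sub_const c).congr' ?_
    filter_upwards [hpos] with m hm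
    field_simp
  have hsum := herr.sum_range (fun x => by positivity) <|
    ((tendsto_sum_range_pow_div_pow p).pos_mul_atTop (by positivity)
      (tendsto_pow_atTop (Nat.succ_ne_zero p) |>.comp tendsto_natCast_atTop_atTop)).congr'
      (by filter_upwards [eventually_gt_atTop 0] with m hm using div_mul_cancel₀ _ (by positivity))
  have hbig : (fun m : ℕ => ∑ x ∈ range m, (x : ℝ) ^ p) =O[atTop]
      (fun m : ℕ => (m : ℝ) ^ (p + 1)) := by
    refine Asymptotics.IsBigO.of_bound 1 (Eventually.of_forall fun m => ?_)
    rw [Real.norm_of_nonneg (by positivity), Real.norm_of_nonneg (by positivity), one_mul]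
    exact (sum_range_pow_le_div p m).trans (div_le_self (by positivity) (by linarith))
  have := ((hsum.trans_isBigO hbig).tendsto_div_nhds_zero).add
    ((tendsto_sum_range_pow_div_pow p).const_mul c)
  rw [zero_add, mul_one_div] at this
  refine this.congr fun m => ?_
  rw [sum_sub_distrib, ← mul_sum]
  ring

theorem sum_Ioc_mul_eq_mul_sum_Ioc_sub {R : Type*} [CommRing R] (a : ℕ → R) (m : ℕ) :
    ∑ j ∈ Ioc 0 m, (j : R) * a j =
      m * ∑ j ∈ Ioc 0 m, a j - ∑ y ∈ range m, ∑ j ∈ Ioc 0 y, a j := by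
  induction m with
  | zero => simp
  | succ m ih =>
    rw [sum_Ioc_succ_top (Nat.zero_le m), sum_Ioc_succ_top (Nat.zero_le m), sum_range_succ, ih]
    push_cast
    ring

theorem tendsto_sum_Ioc_mul_div_pow {a : ℕ → ℝ} {p : ℕ} {c : ℝ}
    (ha : Tendsto (fun m : ℕ => (∑ j ∈ Ioc 0 m, a j) / (m : ℝ) ^ p) atTop (𝓝 c)) :
    Tendsto (fun m : ℕ => (∑ j ∈ Ioc 0 m, (j : ℝ) * a j) / (m : ℝ) ^ (p + 1)) atTop
      (𝓝 (c * p / (p + 1))) := by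
  have hmul : Tendsto (fun m : ℕ => m * (∑ j ∈ Ioc 0 m, a j) / (m : ℝ) ^ (p + 1)) atTop
      (𝓝 c) := by
    refine ha.congr' ?_
    filter_upwards [eventually_gt_atTop 0] with m hm
    field_simp
    ring
  have := hmul.sub ha.sum_range_div_pow
  rw [show c - c / (p + 1) = c * p / (p + 1) by field_simp; ring] at this
  refine this.congr fun m => ?_
  rw [sum_Ioc_mul_eq_mul_sum_Ioc_sub, sub_div]

theorem exists_abs_le_mul_pow {T : ℕ → ℝ} {q : ℕ} {β : ℝ}
    (hT : Tendsto (fun m : ℕ => T m / (m : ℝ) ^ q) atTop (𝓝 β)) (hT0 : T 0 = 0) :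
    ∃ C, 0 ≤ C ∧ ∀ m : ℕ, |T m| ≤ C * (m : ℝ) ^ q := by
  obtain ⟨B, hB⟩ := hT.abs.bddAbove_range
  refine ⟨max B 0, le_max_right _ _, fun m => ?_⟩
  rcases m.eq_zero_or_pos with rfl | hm
  · simp only [hT0, abs_zero, CharP.cast_eq_zero]
    positivity
  · have hmq : (0 : ℝ) < (m : ℝ) ^ q := by positivity
    have : |T m / (m : ℝ) ^ q| ≤ B := hB ⟨m, rfl⟩
    rw [abs_div, abs_of_pos hmq, div_le_iff₀ hmq] at this
    exact this.trans (mul_le_mul_of_nonneg_right (le_max_left _ _) hmq.le)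

theorem tendsto_natCast_div_div_self (d : ℕ) :
    Tendsto (fun m : ℕ => ((m / d : ℕ) : ℝ) / m) atTop (𝓝 (1 / d)) := by
  have hlow : Tendsto (fun m : ℕ => 1 / (d : ℝ) - 1 / m) atTop (𝓝 (1 / d)) := by
    simpa using tendsto_const_nhds.sub (tendsto_one_div_atTop_nhds_zero_nat (𝕜 := ℝ))
  refine tendsto_of_tendsto_of_tendsto_of_le_of_le' hlow tendsto_const_nhds ?_ ?_
  all_goals filter_upwards [eventually_gt_atTop 0] with m hm
  · have hm' : (0 : ℝ) < m := Nat.cast_pos.2 hm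
    have := Nat.floor_div_eq_div (K := ℝ) m d ▸ Nat.lt_floor_add_one ((m : ℝ) / d)
    rw [le_div_iff₀ hm', sub_mul, one_div_mul_cancel hm'.ne', div_mul_eq_mul_div, one_mul]
    linarith
  · rw [div_le_iff₀ (Nat.cast_pos.2 hm), one_div_mul_eq_div]
    exact Nat.cast_div_le

theorem tendsto_comp_div_div_pow {T : ℕ → ℝ} {q : ℕ} {β : ℝ} (hq : q ≠ 0)
    (hT : Tendsto (fun m : ℕ => T m / (m : ℝ) ^ q) atTop (𝓝 β)) (hT0 : T 0 = 0) (d : ℕ) :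
    Tendsto (fun m : ℕ => T (m / d) / (m : ℝ) ^ q) atTop (𝓝 (β * (1 / (d : ℝ) ^ q))) := by
  rcases d.eq_zero_or_pos with rfl | hd
  · simp [hT0, hq]
  have hsplit (m : ℕ) : T (m / d) / (m : ℝ) ^ q =
      T (m / d) / ((m / d : ℕ) : ℝ) ^ q * (((m / d : ℕ) : ℝ) / m) ^ q := by
    rcases (m / d).eq_zero_or_pos with h | h
    · simp [h, hT0]
    · have hm : m ≠ 0 := fun hm => by simp [hm] at h
      rw [div_pow]
      field_simp
  rw [← one_div_pow]
  exact ((hT.comp (Nat.tendsto_div_const_atTop hd.ne')).mul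
    ((tendsto_natCast_div_div_self d).pow q)).congr fun m => (hsplit m).symm

theorem abs_comp_div_div_pow_le {T : ℕ → ℝ} {q : ℕ} {C : ℝ} (hC0 : 0 ≤ C)
    (hC : ∀ k : ℕ, |T k| ≤ C * (k : ℝ) ^ q) (hT0 : T 0 = 0) (m d : ℕ) :
    |T (m / d) / (m : ℝ) ^ q| ≤ C * (1 / (d : ℝ) ^ q) := by
  rcases (m / d).eq_zero_or_pos with h | h
  · simp only [h, hT0, zero_div, abs_zero]
    positivity
  have hm : (0 : ℝ) < m := Nat.cast_pos.2 (Nat.pos_of_ne_zero fun hm => by simp [hm] at h)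
  have hdiv : ((m / d : ℕ) : ℝ) / m ≤ 1 / d := by
    rw [div_le_iff₀ hm, one_div_mul_eq_div]
    exact Nat.cast_div_le
  calc |T (m / d) / (m : ℝ) ^ q| = |T (m / d)| / (m : ℝ) ^ q := by simp [abs_div]
    _ ≤ C * ((m / d : ℕ) : ℝ) ^ q / (m : ℝ) ^ q := by gcongr; exact hC _
    _ = C * (((m / d : ℕ) : ℝ) / m) ^ q := by rw [div_pow, mul_div_assoc]
    _ ≤ C * (1 / (d : ℝ) ^ q) := by rw [← one_div_pow]; gcongr

theorem tendsto_sum_Ioc_comp_div_div_pow {T : ℕ → ℝ} {q : ℕ} {β : ℝ} (hq : 1 < q)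
    (hT : Tendsto (fun m : ℕ => T m / (m : ℝ) ^ q) atTop (𝓝 β)) (hT0 : T 0 = 0) :
    Tendsto (fun m : ℕ => (∑ d ∈ Ioc 0 m, T (m / d)) / (m : ℝ) ^ q) atTop
      (𝓝 (β * ∑' n : ℕ, 1 / (n : ℝ) ^ q)) := by
  obtain ⟨C, hC0, hC⟩ := exists_abs_le_mul_pow hT hT0
  have := tendsto_tsum_of_dominated_convergence
    ((Real.summable_one_div_nat_pow.2 hq).mul_left C)
    (tendsto_comp_div_div_pow (by omega) hT hT0)
    (Eventually.of_forall fun m d => abs_comp_div_div_pow_le hC0 hC hT0 m d)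
  rw [tsum_mul_left] at this
  refine this.congr fun m => ?_
  -- The terms `d = 0` (where `m / 0 = 0`) and `d > m` vanish because `T 0 = 0`.
  rw [sum_div, tsum_eq_sum (s := Ioc 0 m)]
  intro d hd
  rw [mem_Ioc, not_and_or, not_lt, Nat.le_zero, not_le] at hd
  rcases hd with rfl | hd
  · simp [hT0]
  · simp [Nat.div_eq_of_lt hd, hT0]

theorem sum_Ioc_sum_divisors_eq_sum_Ioc_sum_Ioc_div {R : Type*} [CommSemiring R] (f : ℕ → R)
    (m : ℕ) : ∑ j ∈ Ioc 0 m, ∑ e ∈ j.divisors, f e = ∑ d ∈ Ioc 0 m, ∑ e ∈ Ioc 0 (m / d), f e := by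
  let F : ArithmeticFunction R := ⟨fun e => if e = 0 then 0 else f e, if_pos rfl⟩
  have hF {e : ℕ} (he : e ≠ 0) : F e = f e := if_neg he
  calc ∑ j ∈ Ioc 0 m, ∑ e ∈ j.divisors, f e = ∑ j ∈ Ioc 0 m, (F * ζ) j :=
        sum_congr rfl fun j _ => by
          rw [ArithmeticFunction.coe_mul_zeta_apply]
          exact sum_congr rfl fun e he => (hF (Nat.pos_of_mem_divisors he).ne').symm
    _ = ∑ d ∈ Ioc 0 m, (ζ : ArithmeticFunction R) d * ∑ e ∈ Ioc 0 (m / d), F e := by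
        rw [mul_comm, ArithmeticFunction.sum_Ioc_mul_eq_sum_sum]
    _ = ∑ d ∈ Ioc 0 m, ∑ e ∈ Ioc 0 (m / d), f e := sum_congr rfl fun d hd => by
        rw [ArithmeticFunction.natCoe_apply, ArithmeticFunction.zeta_apply_ne (mem_Ioc.1 hd).1.ne',
          Nat.cast_one, one_mul]
        exact sum_congr rfl fun e he => hF (mem_Ioc.1 he).1.ne'

theorem tendsto_sum_Ioc_sum_divisors_mul_div_pow {a : ℕ → ℝ} {p : ℕ} {c : ℝ} (hp : 1 ≤ p)
    (ha : Tendsto (fun m : ℕ => (∑ j ∈ Ioc 0 m, a j) / (m : ℝ) ^ p) atTop (𝓝 c)) :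
    Tendsto (fun m : ℕ => (∑ j ∈ Ioc 0 m, ∑ e ∈ j.divisors, (e : ℝ) * a e) / (m : ℝ) ^ (p + 1))
      atTop (𝓝 (c * p / (p + 1) * ∑' n : ℕ, 1 / (n : ℝ) ^ (p + 1))) := by
  simp_rw [sum_Ioc_sum_divisors_eq_sum_Ioc_sum_Ioc_div]
  exact tendsto_sum_Ioc_comp_div_div_pow (T := fun k => ∑ e ∈ Ioc 0 k, (e : ℝ) * a e)
    (by omega) (tendsto_sum_Ioc_mul_div_pow ha) (by simp)

theorem tendsto_subgroupCountUpTo_div_pow {n : ℕ} (hn : 1 ≤ n) :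
    Tendsto (fun m : ℕ => (subgroupCountUpTo n m : ℝ) / (m : ℝ) ^ n) atTop
      (𝓝 (1 / n * ∏ k ∈ Icc 2 n, ∑' i : ℕ, 1 / (i : ℝ) ^ k)) := by
  induction n, hn using Nat.le_induction with
  | base =>
    have hcount (m : ℕ) : (subgroupCountUpTo 1 m : ℝ) = m := by
      rw [subgroupCountUpTo_eq_sum,
        sum_congr rfl fun j hj => card_subgroups_index_pi_one (mem_Ioc.1 hj).1.ne']
      simp
    rw [Icc_eq_empty (by norm_num), prod_empty, Nat.cast_one, div_one, one_mul]
    refine tendsto_const_nhds.congr' ?_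
    filter_upwards [eventually_gt_atTop 0] with m hm
    rw [hcount, pow_one, div_self (Nat.cast_ne_zero.2 hm.ne')]
  | succ n hn ih =>
    have hcount (m : ℕ) : (subgroupCountUpTo (n + 1) m : ℝ) = ∑ j ∈ Ioc 0 m, ∑ e ∈ j.divisors,
        (e : ℝ) * Nat.card {K : AddSubgroup (Fin n → ℤ) // K.index = e} := by
      rw [subgroupCountUpTo_eq_sum, Nat.cast_sum]
      refine sum_congr rfl fun j hj => ?_
      rw [card_subgroups_index_pi_succ n (mem_Ioc.1 hj).1.ne']
      push_cast
      rfl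
    simp_rw [subgroupCountUpTo_eq_sum, Nat.cast_sum] at ih
    simp_rw [hcount]
    convert tendsto_sum_Ioc_sum_divisors_mul_div_pow hn ih using 2
    rw [prod_Icc_succ_top (by omega : 2 ≤ n + 1)]
    push_cast
    field_simp

/-- As `m → ∞`, `s_m(ℤ^n)/m^n → (1/n)·ζ(n)ζ(n-1)⋯ζ(2)` (the empty product being `1` for
`n = 1`), where `ζ` is the Riemann zeta function. -/
theorem subgroup_growth_asymptotics_of_Zn (n : ℕ) (hn : 1 ≤ n) :
    Tendsto (fun m : ℕ => (subgroupCountUpTo n m : ℂ) / (m : ℂ) ^ n) atTop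
      (nhds ((1 / (n : ℂ)) * ∏ k ∈ Finset.Icc 2 n, riemannZeta (k : ℂ))) := by
  rw [prod_congr rfl fun k hk => zeta_nat_eq_tsum_of_gt_one (mem_Icc.1 hk).1]
  have := tendsto_ofReal_iff.2 (tendsto_subgroupCountUpTo_div_pow hn)
  push_cast at this
  exact this
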